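/- For every positive integer M, the ratio h((1 − (1−2ε)^M)/2)/h(ε) tends to M as ε tends to 0 from the right; that is, the upper bound M on lim_{ε→0⁺} h(ε_M)/h(ε) is achieved. -/

import Mathlib

/-!
Near `0⁺` the binary entropy is asymptotic to `-p log p`, the other term `-(1-p) log (1-p)`
being `O(p)`. If `f ε ~ c ε` with `c > 0`, then `log (f ε) - log ε → log c` is negligible against
`log ε`, so `h (f ε) ~ c · h ε`. The parity probability `(1 - (1 - 2ε)^M) / 2` has derivative `M`
at `0`, hence `c = M`.
-/

open Real Filter Asymptotics Topology

lemma isLittleO_id_negMulLog : (fun x : ℝ => x) =o[𝓝[>] 0] negMulLog := by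
  have hlog : (fun _ : ℝ => (1 : ℝ)) =o[𝓝[>] 0] log :=
    isLittleO_one_left_iff ℝ |>.mpr <| tendsto_abs_atBot_atTop.comp tendsto_log_nhdsGT_zero
  simpa [negMulLog_eq_neg] using ((isBigO_refl (fun x : ℝ => x) _).mul_isLittleO hlog).neg_right

lemma binEntropy_isEquivalent_negMulLog : binEntropy ~[𝓝[>] 0] negMulLog := by
  have hderiv : HasDerivAt (fun p => negMulLog (1 - p)) 1 0 := by
    simpa [Function.comp_def] using (hasDerivAt_negMulLog (x := 1 - 0) (by norm_num)).comp 0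
      ((hasDerivAt_id (0 : ℝ)).const_sub 1)
  have hbigO : (fun p => negMulLog (1 - p)) =O[𝓝[>] 0] fun p => p := by
    simpa using hderiv.isBigO_sub.mono nhdsWithin_le_nhds
  rw [binEntropy_eq_negMulLog_add_negMulLog_one_sub']
  exact IsEquivalent.refl.add_isLittleO (hbigO.trans_isLittleO isLittleO_id_negMulLog)

lemma isEquivalent_log_of_tendsto_div {α : Type*} {l : Filter α} {u v : α → ℝ} {c : ℝ}
    (hc : c ≠ 0) (huv : Tendsto (fun x => u x / v x) l (𝓝 c))
    (hv : Tendsto (fun x => |log (v x)|) l atTop) :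
    (fun x => log (u x)) ~[l] fun x => log (v x) := by
  have hlog_div : (fun x => log (u x / v x)) =ᶠ[l] fun x => log (u x) - log (v x) := by
    filter_upwards [huv.eventually_ne hc] with x hx
    obtain ⟨hu, hv⟩ := div_ne_zero_iff.mp hx
    exact log_div hu hv
  have hbounded : (fun x => log (u x) - log (v x)) =O[l] fun _ => (1 : ℝ) :=
    ((huv.log hc).congr' hlog_div).isBigO_one ℝ
  exact IsLittleO.isEquivalent (hbounded.trans_isLittleO (isLittleO_one_left_iff ℝ |>.mpr hv))

theorem tendsto_binEntropy_comp_div_binEntropy {f : ℝ → ℝ} {c : ℝ} (hc : 0 < c)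
    (hf : Tendsto (fun ε => f ε / ε) (𝓝[>] 0) (𝓝 c)) :
    Tendsto (fun ε => binEntropy (f ε) / binEntropy ε) (𝓝[>] 0) (𝓝 c) := by
  have hf_eq : (fun ε => f ε / ε * ε) =ᶠ[𝓝[>] 0] f := by
    filter_upwards [self_mem_nhdsWithin] with ε hε using div_mul_cancel₀ _ (ne_of_gt hε)
  have hf_tendsto : Tendsto f (𝓝[>] 0) (𝓝[>] 0) := by
    refine tendsto_nhdsWithin_iff.mpr ⟨?_, ?_⟩
    · simpa using (hf.mul (tendsto_nhdsWithin_of_tendsto_nhds tendsto_id)).congr' hf_eq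
    · filter_upwards [hf.eventually (eventually_gt_nhds hc), self_mem_nhdsWithin] with ε h1 h2
      exact (div_pos_iff_of_pos_right h2).mp h1
  have hf_equiv : f ~[𝓝[>] 0] fun ε => c * ε :=
    (((isEquivalent_const_iff_tendsto hc.ne').mpr hf).mul IsEquivalent.refl).congr_left hf_eq
  have hlog : (fun ε => log (f ε)) ~[𝓝[>] 0] log :=
    isEquivalent_log_of_tendsto_div hc.ne' hf (tendsto_abs_atBot_atTop.comp tendsto_log_nhdsGT_zero)
  have hnegMulLog : (fun ε => negMulLog (f ε)) ~[𝓝[>] 0] fun ε => c * negMulLog ε := by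
    convert hf_equiv.neg.mul hlog using 1 <;> ext <;> simp only [negMulLog, Pi.mul_apply]; ring
  have hentropy : (fun ε => binEntropy (f ε)) ~[𝓝[>] 0] fun ε => c * binEntropy ε :=
    (binEntropy_isEquivalent_negMulLog.comp_tendsto hf_tendsto).trans <|
      hnegMulLog.trans (IsEquivalent.refl.mul binEntropy_isEquivalent_negMulLog.symm)
  have hne : ∀ᶠ ε in 𝓝[>] 0, binEntropy ε ≠ 0 := by
    filter_upwards [Ioo_mem_nhdsGT one_pos] with ε hε using (binEntropy_pos hε.1 hε.2).ne'
  refine (hentropy.div IsEquivalent.refl).symm.tendsto_nhds (tendsto_const_nhds.congr' ?_)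
  filter_upwards [hne] with ε hε
  simp only [Pi.div_apply]
  field_simp

/-- For every positive integer `M`, the ratio `h((1 − (1−2ε)^M)/2)/h(ε)` tends to `M` as
`ε → 0⁺`: the upper bound `M` on the entropy ratio is achieved in the limit. -/
theorem binEntropy_parity_ratio_tendsto (M : ℕ) (hM : 0 < M) :
    Tendsto (fun ε : ℝ => binEntropy ((1 - (1 - 2 * ε) ^ M) / 2) / binEntropy ε)
      (nhdsWithin 0 (Set.Ioi 0)) (nhds (M : ℝ)) := by
  have hderiv : HasDerivAt (fun ε : ℝ => (1 - (1 - 2 * ε) ^ M) / 2) M 0 := by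
    have hinner : HasDerivAt (fun ε : ℝ => 1 - 2 * ε) (-2) 0 := by
      simpa using ((hasDerivAt_id (0 : ℝ)).const_mul 2).const_sub 1
    exact (((hinner.fun_pow M).const_sub 1).div_const 2).congr_deriv (by simp)
  have hslope : Tendsto (fun ε : ℝ => (1 - (1 - 2 * ε) ^ M) / 2 / ε) (𝓝[>] 0) (𝓝 M) := by
    simpa [div_eq_inv_mul] using hderiv.tendsto_slope_zero_right
  exact tendsto_binEntropy_comp_div_binEntropy (by exact_mod_cast hM) hslope
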